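/- arXiv:1512.01952 — 3 statements merged into one kernel-verified Lean document; each statement's English description precedes it below -/
import Mathlib

section
/- Every e/e-persistent place/transition net is l/l-persistent: if a p/t-net S satisfies that for every reachable marking M and all distinct transitions a, b, Ma and Mb imply that the string ab is enabled in M, then S satisfies that for every reachable marking M and all distinct transitions a, b, if Ma and there exists u ∈ T* with the string ub enabled in M, then there exists v ∈ T* with the string avb enabled in M. -/
open Classical in
/-- The marking obtained by firing transition `a` in marking `M`:
tokens are removed from entries of `a` and added to exits of `a`. -/
noncomputable def fire {P T : Type} (Fpt : P → T → Prop) (Ftp : T → P → Prop)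
    (M : P → ℕ) (a : T) : P → ℕ :=
  fun p => M p - (if Fpt p a then 1 else 0) + (if Ftp a p then 1 else 0)

/-- Transition `a` is enabled in marking `M` (all its entries are marked). -/
def Enabled {P T : Type} (Fpt : P → T → Prop) (M : P → ℕ) (a : T) : Prop :=
  ∀ p, Fpt p a → 1 ≤ M p

/-- `Fires Fpt Ftp M w M'` means the string `w` is enabled in `M` and its
execution leads from `M` to `M'` (the predicate `M w M'`). -/
inductive Fires {P T : Type} (Fpt : P → T → Prop) (Ftp : T → P → Prop) :
    (P → ℕ) → List T → (P → ℕ) → Prop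
  | nil (M : P → ℕ) : Fires Fpt Ftp M [] M
  | cons {M M'' : P → ℕ} {a : T} {w : List T} :
      Enabled Fpt M a → Fires Fpt Ftp (fire Fpt Ftp M a) w M'' →
      Fires Fpt Ftp M (a :: w) M''

/-- The string `w` is enabled in marking `M` (the predicate `M w`). -/
def EnabledSeq {P T : Type} (Fpt : P → T → Prop) (Ftp : T → P → Prop)
    (M : P → ℕ) (w : List T) : Prop :=
  ∃ M', Fires Fpt Ftp M w M'

/-- `M` is reachable from the initial marking `M0`. -/
def Reachable {P T : Type} (Fpt : P → T → Prop) (Ftp : T → P → Prop)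
    (M0 M : P → ℕ) : Prop :=
  ∃ w : List T, Fires Fpt Ftp M0 w M

def EEPersistent {P T : Type} (Fpt : P → T → Prop) (Ftp : T → P → Prop) (M0 : P → ℕ) : Prop :=
  ∀ M : P → ℕ, Reachable Fpt Ftp M0 M → ∀ a b : T, a ≠ b →
    Enabled Fpt M a → Enabled Fpt M b → EnabledSeq Fpt Ftp M [a, b]

section

variable {P T : Type} {Fpt : P → T → Prop} {Ftp : T → P → Prop} {M M' M'' : P → ℕ} {a c : T}

theorem Fires.append {u v : List T} (h₁ : Fires Fpt Ftp M u M') (h₂ : Fires Fpt Ftp M' v M'') :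
    Fires Fpt Ftp M (u ++ v) M'' := by
  induction h₁ with
  | nil => exact h₂
  | cons ha _ ih => exact .cons ha (ih h₂)

theorem Reachable.fire {M0 : P → ℕ} (hM : Reachable Fpt Ftp M0 M) (ha : Enabled Fpt M a) :
    Reachable Fpt Ftp M0 (fire Fpt Ftp M a) :=
  let ⟨w, hw⟩ := hM
  ⟨w ++ [a], hw.append (.cons ha (.nil _))⟩

theorem enabledSeq_nil : EnabledSeq Fpt Ftp M [] :=
  ⟨M, .nil M⟩

theorem enabledSeq_cons_iff {w : List T} :
    EnabledSeq Fpt Ftp M (a :: w) ↔ Enabled Fpt M a ∧ EnabledSeq Fpt Ftp (fire Fpt Ftp M a) w := by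
  constructor
  · rintro ⟨M', h⟩
    cases h with
    | cons ha hw => exact ⟨ha, M', hw⟩
  · rintro ⟨ha, M', hw⟩
    exact ⟨M', .cons ha hw⟩

theorem enabledSeq_pair_iff :
    EnabledSeq Fpt Ftp M [a, c] ↔ Enabled Fpt M a ∧ Enabled Fpt (fire Fpt Ftp M a) c := by
  simp only [enabledSeq_cons_iff, enabledSeq_nil, and_true]

open Classical in
/-- The truncated subtraction in `fire` is exact when the transition is enabled. -/
theorem fire_apply_of_enabled (ha : Enabled Fpt M a) (p : P) :
    (fire Fpt Ftp M a p : ℤ) = M p - (if Fpt p a then 1 else 0) + (if Ftp a p then 1 else 0) := by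
  unfold fire
  split_ifs with hpa <;> have := ha p <;> simp_all

theorem fire_comm (ha : Enabled Fpt M a) (hc : Enabled Fpt M c)
    (hac : Enabled Fpt (fire Fpt Ftp M a) c) (hca : Enabled Fpt (fire Fpt Ftp M c) a) :
    fire Fpt Ftp (fire Fpt Ftp M a) c = fire Fpt Ftp (fire Fpt Ftp M c) a := by
  funext p
  apply Nat.cast_injective (R := ℤ)
  rw [fire_apply_of_enabled hac, fire_apply_of_enabled hca, fire_apply_of_enabled ha,
    fire_apply_of_enabled hc]
  ring

/-- Push `a` to the front of `u ++ [b]` one transition at a time: e/e-persistence lets `a` and the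
first transition `c` of `u` fire in either order, and both orders reach the same marking. -/
theorem EEPersistent.exists_enabledSeq_cons_append {M0 : P → ℕ} {b : T}
    (hee : EEPersistent Fpt Ftp M0) (hab : a ≠ b) {u : List T} (hM : Reachable Fpt Ftp M0 M)
    (ha : Enabled Fpt M a) (hu : EnabledSeq Fpt Ftp M (u ++ [b])) :
    ∃ v : List T, EnabledSeq Fpt Ftp M (a :: (v ++ [b])) := by
  induction u generalizing M with
  | nil =>
    have hb := (enabledSeq_cons_iff.mp hu).1
    exact ⟨[], hee M hM a b hab ha hb⟩
  | cons c u ih =>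
    obtain ⟨hc, hu⟩ := enabledSeq_cons_iff.mp hu
    obtain rfl | hne := eq_or_ne a c
    · exact ⟨u, enabledSeq_cons_iff.mpr ⟨ha, hu⟩⟩
    have hca := (enabledSeq_pair_iff.mp (hee M hM c a hne.symm hc ha)).2
    have hac := (enabledSeq_pair_iff.mp (hee M hM a c hne ha hc)).2
    obtain ⟨v, hv⟩ := ih (hM.fire hc) hca hu
    rw [enabledSeq_cons_iff, ← fire_comm ha hc hac hca] at hv
    exact ⟨c :: v, enabledSeq_cons_iff.mpr ⟨ha, enabledSeq_cons_iff.mpr ⟨hac, hv.2⟩⟩⟩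

end

theorem ee_persistent_imp_ll_persistent_general {P T : Type}
    (Fpt : P → T → Prop) (Ftp : T → P → Prop) (M0 : P → ℕ)
    (hee : ∀ M : P → ℕ, Reachable Fpt Ftp M0 M → ∀ a b : T, a ≠ b →
      Enabled Fpt M a → Enabled Fpt M b → EnabledSeq Fpt Ftp M [a, b]) :
    ∀ M : P → ℕ, Reachable Fpt Ftp M0 M → ∀ a b : T, a ≠ b →
      Enabled Fpt M a → (∃ u : List T, EnabledSeq Fpt Ftp M (u ++ [b])) →
      ∃ v : List T, EnabledSeq Fpt Ftp M (a :: (v ++ [b])) := by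
  rintro M hM a b hab ha ⟨u, hu⟩
  exact EEPersistent.exists_enabledSeq_cons_append hee hab hM ha hu

/-- Every e/e-persistent place/transition net is l/l-persistent. -/
theorem ee_persistent_imp_ll_persistent {P T : Type} [Fintype P] [Fintype T]
    (Fpt : P → T → Prop) (Ftp : T → P → Prop) (M0 : P → ℕ)
    (hee : ∀ M : P → ℕ, Reachable Fpt Ftp M0 M → ∀ a b : T, a ≠ b →
      Enabled Fpt M a → Enabled Fpt M b → EnabledSeq Fpt Ftp M [a, b]) :
    ∀ M : P → ℕ, Reachable Fpt Ftp M0 M → ∀ a b : T, a ≠ b →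
      Enabled Fpt M a → (∃ u : List T, EnabledSeq Fpt Ftp M (u ++ [b])) →
      ∃ v : List T, EnabledSeq Fpt Ftp M (a :: (v ++ [b])) :=
  ee_persistent_imp_ll_persistent_general Fpt Ftp M0 hee
end

section
/- For every p/t-net and every transition a ∈ T there exists a natural number k_a ∈ ℕ such that for every marking M : P → ℕ, either a is dead in M (there is no w ∈ T* with the string wa enabled in M) or a is k_a-enabled in M (there exists w ∈ T* with |w| ≤ k_a and the string wa enabled in M). -/
/-!
Firing is monotone in the marking, so for each `k` the set of markings in which `a` is
`k`-enabled is upward closed, and these sets increase with `k`. By Dickson's lemma markings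
are well-quasi-ordered, and in a well-quasi-order an increasing chain of upward closed sets
stabilises: its union is generated by finitely many minimal elements, each lying in some member
of the chain. The index where the chain stabilises is the bound `k_a`.
-/

theorem exists_iUnion_subset_of_monotone_of_isUpperSet {α : Type*} [PartialOrder α]
    [WellQuasiOrderedLE α] {s : ℕ → Set α} (hmono : Monotone s) (hup : ∀ k, IsUpperSet (s k)) :
    ∃ K, ⋃ k, s k ⊆ s K := by
  have hpwo := Set.isPWO_of_wellQuasiOrderedLE (⋃ k, s k)
  have hfin : {x | Minimal (· ∈ ⋃ k, s k) x}.Finite :=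
    WellQuasiOrderedLE.finite_of_isAntichain (setOfPred_minimal_antichain _)
  have hidx : ∀ x ∈ hfin.toFinset, ∃ k, x ∈ s k := fun x hx =>
    Set.mem_iUnion.mp (hfin.mem_toFinset.mp hx).prop
  choose! idx hidx using hidx
  refine ⟨hfin.toFinset.sup idx, fun y hy => ?_⟩
  obtain ⟨x, hxy, hx⟩ := hpwo.exists_le_minimal hy
  have hxfin : x ∈ hfin.toFinset := hfin.mem_toFinset.mpr hx
  exact hup _ hxy (hmono (Finset.le_sup hxfin) (hidx x hxfin))

section PetriNet

variable {P T : Type} {Fpt : P → T → Prop} {Ftp : T → P → Prop}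

theorem Enabled.mono {M M' : P → ℕ} {a : T} (h : Enabled Fpt M a) (hle : M ≤ M') :
    Enabled Fpt M' a :=
  fun p hp => (h p hp).trans (hle p)

theorem fire_mono {M M' : P → ℕ} (hle : M ≤ M') (a : T) :
    fire Fpt Ftp M a ≤ fire Fpt Ftp M' a :=
  fun p => Nat.add_le_add_right (Nat.sub_le_sub_right (hle p) _) _

theorem Fires.mono {M M' N : P → ℕ} {w : List T} (h : Fires Fpt Ftp M w N) (hle : M ≤ M') :
    ∃ N', Fires Fpt Ftp M' w N' ∧ N ≤ N' := by
  induction h generalizing M' with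
  | nil => exact ⟨M', .nil M', hle⟩
  | cons hen _ ih =>
    obtain ⟨N', hN', hNle⟩ := ih (fire_mono hle _)
    exact ⟨N', .cons (hen.mono hle) hN', hNle⟩

theorem EnabledSeq.mono {M M' : P → ℕ} {w : List T} (h : EnabledSeq Fpt Ftp M w)
    (hle : M ≤ M') : EnabledSeq Fpt Ftp M' w :=
  let ⟨_, hN⟩ := h
  let ⟨N', hN', _⟩ := hN.mono hle
  ⟨N', hN'⟩

variable (Fpt Ftp) in
def kEnabledSet (a : T) (k : ℕ) : Set (P → ℕ) :=
  {M | ∃ w : List T, w.length ≤ k ∧ EnabledSeq Fpt Ftp M (w ++ [a])}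

theorem monotone_kEnabledSet (a : T) : Monotone (kEnabledSet Fpt Ftp a) :=
  fun _ _ hkl _ ⟨w, hw, hen⟩ => ⟨w, hw.trans hkl, hen⟩

theorem isUpperSet_kEnabledSet (a : T) (k : ℕ) : IsUpperSet (kEnabledSet Fpt Ftp a k) :=
  fun _ _ hle ⟨w, hw, hen⟩ => ⟨w, hw, hen.mono hle⟩

end PetriNet

theorem exists_enabledness_bound_general {P T : Type} [Fintype P]
    (Fpt : P → T → Prop) (Ftp : T → P → Prop) (a : T) :
    ∃ ka : ℕ, ∀ M : P → ℕ,
      (¬ ∃ w : List T, EnabledSeq Fpt Ftp M (w ++ [a])) ∨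
      (∃ w : List T, w.length ≤ ka ∧ EnabledSeq Fpt Ftp M (w ++ [a])) := by
  obtain ⟨K, hK⟩ := exists_iUnion_subset_of_monotone_of_isUpperSet
    (monotone_kEnabledSet (Fpt := Fpt) (Ftp := Ftp) a) (isUpperSet_kEnabledSet a)
  refine ⟨K, fun M => or_iff_not_imp_left.mpr fun hlive => ?_⟩
  obtain ⟨w, hw⟩ := not_not.mp hlive
  exact hK (Set.mem_iUnion.mpr ⟨w.length, w, le_rfl, hw⟩)

/-- For every transition `a` of a p/t-net there is a bound `k_a` such that in
every marking `M`, the transition `a` is either dead or `k_a`-enabled. -/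
theorem exists_enabledness_bound {P T : Type} [Fintype P] [Fintype T]
    (Fpt : P → T → Prop) (Ftp : T → P → Prop) (M0 : P → ℕ) (a : T) :
    ∃ ka : ℕ, ∀ M : P → ℕ,
      (¬ ∃ w : List T, EnabledSeq Fpt Ftp M (w ++ [a])) ∨
      (∃ w : List T, w.length ≤ ka ∧ EnabledSeq Fpt Ftp M (w ++ [a])) :=
  exists_enabledness_bound_general Fpt Ftp a
end

section
/- Every order-convex subset of ℕ^k is rational (semilinear): if X ⊆ (Fin k → ℕ) satisfies that for all x, y, z with x ≤ y ≤ z componentwise, x ∈ X and z ∈ X imply y ∈ X, then X is semilinear, i.e., X is a finite union of linear sets of the form b + C where b ∈ (Fin k → ℕ) and C is the additive submonoid of (Fin k → ℕ) generated by a finite set of vectors. -/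
/-!
An order-convex set is the intersection of its upper and its lower closure. In `ℕ^k`, which is
well-quasi-ordered by Dickson's lemma, every upper set is generated by its finitely many minimal
elements, so it is a finite union of cones `a + ℕ^k`, hence semilinear. A lower set is the
complement of an upper set, and semilinear sets are closed under complement and intersection
(Ginsburg–Spanier).
-/

open Set Pointwise

theorem exists_finite_subset_upperClosure_eq {α : Type*} [PartialOrder α] [WellQuasiOrderedLE α]
    (s : Set α) : ∃ t ⊆ s, t.Finite ∧ upperClosure t = upperClosure s := by
  refine ⟨{x | Minimal (· ∈ s) x}, fun x hx => hx.prop,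
    WellQuasiOrderedLE.finite_of_isAntichain (setOfPred_minimal_antichain _), ?_⟩
  refine SetLike.ext fun x => ?_
  simp only [mem_upperClosure]
  constructor
  · rintro ⟨a, ha, hax⟩
    exact ⟨a, ha.prop, hax⟩
  · rintro ⟨a, ha, hax⟩
    obtain ⟨b, hba, hb⟩ := (isPWO_of_wellQuasiOrderedLE s).exists_le_minimal ha
    exact ⟨b, hb, hba.trans hax⟩

section CanonicallyOrdered

variable {M : Type*} [AddCommMonoid M] [PartialOrder M] [CanonicallyOrderedAdd M]

theorem Set.Ici_eq_vadd_univ (a : M) : Ici a = a +ᵥ (univ : Set M) := by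
  ext x
  simp [mem_vadd_set, le_iff_exists_add, eq_comm]

variable [AddMonoid.FG M] [WellQuasiOrderedLE M] {s : Set M}

theorem IsUpperSet.isSemilinearSet (hs : IsUpperSet s) : IsSemilinearSet s := by
  obtain ⟨t, -, ht, hts⟩ := exists_finite_subset_upperClosure_eq s
  rw [← hs.upperClosure, ← hts, coe_upperClosure]
  refine .biUnion ht fun a _ => ?_
  rw [Ici_eq_vadd_univ]
  exact .vadd a .univ

theorem IsLowerSet.isSemilinearSet (hs : IsLowerSet s) : IsSemilinearSet s := by
  simpa using hs.compl.isSemilinearSet.compl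

theorem Set.OrdConnected.isSemilinearSet (hs : s.OrdConnected) : IsSemilinearSet s := by
  rw [← hs.upperClosure_inter_lowerClosure]
  exact (upperClosure s).upper.isSemilinearSet.inter (lowerClosure s).lower.isSemilinearSet

end CanonicallyOrdered

theorem IsSemilinearSet.exists_fin_eq_iUnion_vadd_closure {M : Type*} [AddCommMonoid M]
    {s : Set M} (hs : IsSemilinearSet s) :
    ∃ (n : ℕ) (b : Fin n → M) (C : Fin n → Finset M),
      s = ⋃ i, b i +ᵥ (AddSubmonoid.closure (C i : Set M) : Set M) := by
  obtain ⟨S, hS, rfl⟩ := isSemilinearSet_iff.1 hs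
  choose! b C hbC using fun t ht => isLinearSet_iff.1 (hS t ht)
  refine ⟨S.card, fun i => b (S.equivFin.symm i), fun i => C (S.equivFin.symm i), ?_⟩
  calc ⋃₀ (S : Set (Set M)) = ⋃ t : S, (t : Set M) := sUnion_eq_iUnion
    _ = ⋃ t : S, b t +ᵥ (AddSubmonoid.closure (C t : Set M) : Set M) :=
      iUnion_congr fun t => hbC t t.2
    _ = _ := (S.equivFin.symm.surjective.iUnion_comp _).symm

/-- **Every order-convex subset of ℕ^k is rational (semilinear)**: if
`X ⊆ ℕ^k` is order-convex (for all `x ≤ y ≤ z` with `x, z ∈ X`, also `y ∈ X`),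
then `X` is a finite union of linear sets `b i + C i`, where each `C i` is the
additive submonoid of `ℕ^k` generated by a finite set of vectors. -/
theorem convex_subset_semilinear {k : ℕ} (X : Set (Fin k → ℕ))
    (hconv : ∀ x y z : Fin k → ℕ, x ≤ y → y ≤ z → x ∈ X → z ∈ X → y ∈ X) :
    ∃ (n : ℕ) (b : Fin n → (Fin k → ℕ)) (C : Fin n → Finset (Fin k → ℕ)),
      X = ⋃ i : Fin n,
        {v : Fin k → ℕ |
          ∃ c ∈ AddSubmonoid.closure ((C i : Set (Fin k → ℕ))), v = b i + c} := by
  have hX : X.OrdConnected := ⟨fun x hx z hz y hy => hconv x y z hy.1 hy.2 hx hz⟩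
  obtain ⟨n, b, C, hXeq⟩ := hX.isSemilinearSet.exists_fin_eq_iUnion_vadd_closure
  refine ⟨n, b, C, hXeq.trans ?_⟩
  simp only [Set.ext_iff, mem_iUnion, mem_vadd_set, SetLike.mem_coe, mem_ofPred_eq, vadd_eq_add,
    eq_comm, implies_true]
end
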